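/- arXiv:2112.13462 — 4 statements merged into one kernel-verified Lean document; each statement's English description precedes it below -/
import Mathlib

section
/- Let M be a matroid on ground set E and F a flat of M. Let Z(F) be the union of all circuits of M contained in F. Then the closure of the complement E ∖ F in the dual matroid M* equals the complement E ∖ Z(F). -/
/-- A circuit of a matroid: a minimal dependent set. -/
def MatroidCircuit {α : Type*} (M : Matroid α) (C : Set α) : Prop := Minimal M.Dep C

/-- `Z(F)`: the union of all circuits of `M` contained in `F`. -/
def cyclicPart {α : Type*} (M : Matroid α) (F : Set α) : Set α :=
  ⋃₀ {C | MatroidCircuit M C ∧ C ⊆ F}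

/-!
An element `e ∉ X` lies in the dual closure of `X` exactly when it is a loop of `M✶ ／ X`, i.e. a
coloop of `M ＼ X`, i.e. when `e ∉ cl((E \ X) \ {e})`. For `X = E \ F` this says that no circuit
through `e` lies inside `F`, which is precisely `e ∉ Z(F)`.
-/

open Set

namespace Matroid

variable {α : Type*} {M : Matroid α} {X : Set α} {e : α}

lemma mem_dual_closure_iff_of_notMem (heX : e ∉ X) :
    e ∈ M✶.closure X ↔ e ∈ M.E ∧ e ∉ M.closure ((M.E \ X) \ {e}) := by
  rw [← and_iff_left heX (a := e ∈ M✶.closure X), ← contract_isLoop_iff_mem_closure,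
    ← dual_isColoop_iff_isLoop, dual_contract_dual, delete_isColoop_iff]
  tauto

end Matroid

section

variable {α : Type*} {M : Matroid α} {F : Set α} {e : α}

open Matroid in
lemma mem_cyclicPart_iff : e ∈ cyclicPart M F ↔ e ∈ F ∧ e ∈ M.closure (F \ {e}) := by
  refine ⟨fun ⟨C, ⟨hC, hCF⟩, heC⟩ ↦ ⟨hCF heC, ?_⟩, fun ⟨heF, hcl⟩ ↦ ?_⟩
  · exact M.closure_subset_closure (sdiff_subset_sdiff_left hCF)
      (IsCircuit.mem_closure_sdiff_singleton_of_mem hC heC)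
  · obtain ⟨C, hCF, hC, heC⟩ := (mem_closure_iff_exists_isCircuit (by simp)).1 hcl
    exact ⟨C, ⟨hC, by simpa [heF] using hCF⟩, heC⟩

end

theorem dual_closure_compl_eq_compl_cyclicPart_general {α : Type*} (M : Matroid α) (F : Set α) :
    M✶.closure (M.E \ F) = M.E \ cyclicPart M F := by
  ext e
  by_cases he : e ∈ M.E \ F
  · have hZ : e ∉ cyclicPart M F := fun h ↦ he.2 (mem_cyclicPart_iff.1 h).1
    exact iff_of_true (M✶.subset_closure _ sdiff_subset he) ⟨he.1, hZ⟩
  rw [Matroid.mem_dual_closure_iff_of_notMem he, Set.sdiff_sdiff_right_self, inter_sdiff_assoc,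
    inter_comm, Matroid.closure_inter_ground, mem_sdiff, mem_cyclicPart_iff]
  rw [mem_sdiff] at he
  tauto

/-- for a flat `F` of a matroid `M` on ground set `E`, the closure of
`E \ F` in the dual matroid `M✶` is the complement `E \ Z(F)`. -/
theorem dual_closure_compl_eq_compl_cyclicPart {α : Type*} (M : Matroid α) (F : Set α)
    (hF : M.IsFlat F) :
    M✶.closure (M.E \ F) = M.E \ cyclicPart M F :=
  dual_closure_compl_eq_compl_cyclicPart_general M F
end

section
/- With W a realization of a matroid M and 𝔞 = (f₁g₁,…,fₙgₙ) the ideal of pairs of W, the minimal primes of S/𝔞 are exactly the ideals 𝔭_{F,F^∁} = (fᵢ : i ∈ F) + (gⱼ : j ∉ F) as F ranges over the cyclic flats of M. Consequently, V(𝔞) = ⋃_{F ∈ cyc(M)} V(𝔭_{F,F^∁}). -/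
/-!
An ideal generated by linear forms is prime and contains no linear form outside the span of its
generators; in particular every `𝔭_{F,Fᶜ}` is a prime containing `𝔞`.

If `q ⊇ 𝔞` is prime, `A = {i | fᵢ ∈ q}` is a flat of `M`, `B = {j | gⱼ ∈ q}` is a flat of `M✶`,
and `A ∪ B` is everything because `fᵢ gᵢ ∈ q`. The complement of a flat of `M✶` is a union of circuits of `M`, so
`F = cl(Bᶜ)` is a cyclic flat with `Bᶜ ⊆ F ⊆ A`, i.e. `𝔭_{F,Fᶜ} ⊆ q`.

For minimality let `q ⊆ 𝔭_{F,Fᶜ}` with `F` cyclic. A base `B` of `M` spans the `fᵢ` with `|B|`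
vectors and `Bᶜ` spans the `gᵢ` with `|Bᶜ|`; since together they span all `n` variables,
`span f ∩ span g = 0`. So if `fᵢ ∉ q` for some `i ∈ F`, then `gᵢ ∈ q ⊆ 𝔭_{F,Fᶜ}` forces
`gᵢ ∈ span (gⱼ : j ∉ F)`, i.e. `i ∈ cl*(Fᶜ)`, which is impossible for an element of a circuit
inside `F`; symmetrically `gⱼ ∉ q` with `j ∉ F` would put `j` in `cl F = F`.
-/

open MvPolynomial

/-- A cyclic flat: a flat which is a union of circuits. -/
def IsCyclicFlat {α : Type*} (M : Matroid α) (F : Set α) : Prop :=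
  M.IsFlat F ∧ ∃ 𝒞 : Set (Set α), (∀ C ∈ 𝒞, MatroidCircuit M C) ∧ F = ⋃₀ 𝒞

open Set Submodule

namespace Matroid

variable {α : Type*} {M : Matroid α} {B X : Set α} {e : α}

lemma mem_dual_closure_iff_notMem_closure (he : e ∈ M.E) (heX : e ∉ X) :
    e ∈ M✶.closure X ↔ e ∉ M.closure (M.E \ insert e X) := by
  -- `e` is a loop of `M✶ ／ X` exactly when it is a coloop of `(M✶ ／ X)✶ = M ＼ X`.
  have h : (M ＼ X).IsColoop e ↔ (M✶ ／ X).IsLoop e := by rw [IsColoop, dual_delete]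
  rw [isColoop_iff_notMem_closure_compl (show e ∈ (M ＼ X).E from ⟨he, heX⟩),
    contract_isLoop_iff_mem_closure, delete_closure_eq, delete_ground] at h
  have hset : ((M.E \ X) \ {e}) \ X = M.E \ insert e X := by ext; simp; tauto
  simpa [hset, heX] using h.symm

lemma exists_isCircuit_subset_sdiff_of_dual_isFlat (hB : M✶.IsFlat B) (he : e ∈ M.E)
    (heB : e ∉ B) : ∃ C ⊆ M.E \ B, M.IsCircuit C ∧ e ∈ C := by
  have hcl : e ∈ M.closure (M.E \ insert e B) := by
    by_contra h
    exact heB (hB.closure ▸ (mem_dual_closure_iff_notMem_closure he heB).2 h)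
  obtain ⟨C, hCsub, hC, heC⟩ := exists_isCircuit_of_mem_closure hcl (fun h ↦ h.2 (mem_insert e B))
  refine ⟨C, fun x hx ↦ ?_, hC, heC⟩
  rcases hCsub hx with rfl | ⟨hxE, hxB⟩
  exacts [⟨he, heB⟩, ⟨hxE, fun h ↦ hxB (mem_insert_of_mem e h)⟩]

end Matroid

section CyclicFlat

open Matroid

variable {α : Type*} {M : Matroid α} {B F X : Set α} {e : α}

lemma isCyclicFlat_iff :
    IsCyclicFlat M F ↔ M.IsFlat F ∧ ∀ e ∈ F, ∃ C ⊆ F, M.IsCircuit C ∧ e ∈ C := by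
  refine and_congr_right fun _ ↦ ⟨?_, fun h ↦ ⟨{C | C ⊆ F ∧ M.IsCircuit C}, fun C hC ↦ hC.2, ?_⟩⟩
  · rintro ⟨𝒞, h𝒞, rfl⟩ e ⟨C, hC, heC⟩
    exact ⟨C, subset_sUnion_of_mem hC, h𝒞 C hC, heC⟩
  · ext e
    refine ⟨fun he ↦ ?_, fun ⟨C, ⟨hCF, _⟩, heC⟩ ↦ hCF heC⟩
    obtain ⟨C, hCF, hC, heC⟩ := h e he
    exact ⟨C, ⟨hCF, hC⟩, heC⟩

lemma IsCyclicFlat.notMem_dual_closure_sdiff (hF : IsCyclicFlat M F) (he : e ∈ F) :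
    e ∉ M✶.closure (M.E \ F) := by
  obtain ⟨hflat, hcyc⟩ := isCyclicFlat_iff.1 hF
  obtain ⟨C, hCF, hC, heC⟩ := hcyc e he
  have hFE := hflat.subset_ground
  have hset : M.E \ insert e (M.E \ F) = F \ {e} := by
    ext x; have := @hFE x; simp; tauto
  rw [mem_dual_closure_iff_notMem_closure (hFE he) (fun h ↦ h.2 he), not_not, hset]
  exact M.closure_subset_closure (sdiff_subset_sdiff_left hCF)
    (hC.mem_closure_sdiff_singleton_of_mem heC)

lemma isCyclicFlat_closure (hX : ∀ e ∈ X, ∃ C ⊆ X, M.IsCircuit C ∧ e ∈ C) :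
    IsCyclicFlat M (M.closure X) := by
  refine isCyclicFlat_iff.2 ⟨M.isFlat_closure X, fun e he ↦ ?_⟩
  obtain ⟨C, hCX, hC, heC⟩ : ∃ C, C \ {e} ⊆ X ∧ M.IsCircuit C ∧ e ∈ C := by
    by_cases heX : e ∈ X
    · obtain ⟨C, hCX, hC, heC⟩ := hX e heX
      exact ⟨C, sdiff_subset.trans hCX, hC, heC⟩
    · obtain ⟨C, hCX, hC, heC⟩ := exists_isCircuit_of_mem_closure he heX
      exact ⟨C, by simpa using hCX, hC, heC⟩
  exact ⟨C, (hC.subset_closure_sdiff_singleton e).trans (M.closure_subset_closure hCX), hC, heC⟩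

lemma exists_isCyclicFlat_between {A : Set α} (hA : M.IsFlat A) (hB : M✶.IsFlat B)
    (hAB : M.E ⊆ A ∪ B) : ∃ F, IsCyclicFlat M F ∧ F ⊆ A ∧ M.E \ F ⊆ B := by
  refine ⟨M.closure (M.E \ B), isCyclicFlat_closure fun e he ↦
    exists_isCircuit_subset_sdiff_of_dual_isFlat hB he.1 he.2, ?_, fun x hx ↦ ?_⟩
  · rw [← hA.closure]
    exact M.closure_subset_closure fun x hx ↦ (hAB hx.1).resolve_right hx.2
  · by_contra hxB
    exact hx.2 (M.subset_closure _ sdiff_subset ⟨hx.1, hxB⟩)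

end CyclicFlat

namespace Matroid

variable {k V ι : Type*} [Field k] [AddCommGroup V] [Module k V]
  {M : Matroid ι} {f g : ι → V}

lemma mem_closure_iff_mem_span (hE : M.E = univ) (hf : ∀ I, M.Indep I ↔ LinearIndepOn k f I)
    {X : Set ι} {e : ι} : e ∈ M.closure X ↔ f e ∈ span k (f '' X) := by
  have hindep : ∀ I, M.Indep I → ∀ e, e ∈ M.closure I ↔ f e ∈ span k (f '' I) := by
    intro I hI e
    by_cases heI : e ∈ I
    · exact iff_of_true (M.subset_closure I hI.subset_ground heI)
        (subset_span (mem_image_of_mem f heI))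
    rw [← not_iff_not, hI.notMem_closure_iff_of_notMem heI (hE ▸ mem_univ e), hf,
      linearIndepOn_insert heI, and_iff_right ((hf I).1 hI)]
  obtain ⟨I, hI⟩ := M.exists_isBasis X (hE ▸ subset_univ X)
  have hspan : span k (f '' I) = span k (f '' X) :=
    le_antisymm (span_mono (image_mono hI.subset)) <| span_le.2 <|
      image_subset_iff.2 fun x hx ↦ (hindep I hI.indep x).1 (hI.subset_closure hx)
  rw [← hI.closure_eq_closure, hindep I hI.indep, hspan]

lemma isFlat_preimage (hE : M.E = univ) (hf : ∀ I, M.Indep I ↔ LinearIndepOn k f I)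
    (P : Submodule k V) : M.IsFlat (f ⁻¹' P) := by
  refine isFlat_iff_closure_eq.2 (subset_antisymm (fun e he ↦ ?_)
    (M.subset_closure _ (hE ▸ subset_univ _)))
  exact span_le.2 (image_preimage_subset f P) ((mem_closure_iff_mem_span hE hf).1 he)

lemma IsBase.span_image_eq (hE : M.E = univ) (hf : ∀ I, M.Indep I ↔ LinearIndepOn k f I)
    {B : Set ι} (hB : M.IsBase B) : span k (f '' B) = span k (range f) := by
  refine le_antisymm (span_mono (image_subset_range f B))
    (span_le.2 (range_subset_iff.2 fun i ↦ ?_))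
  rw [SetLike.mem_coe, ← mem_closure_iff_mem_span hE hf, hB.closure_eq, hE]
  exact mem_univ i

lemma finrank_span_range_add_finrank_span_range_le [Fintype ι] (hE : M.E = univ)
    (hf : ∀ I, M.Indep I ↔ LinearIndepOn k f I) (hg : ∀ I, M✶.Indep I ↔ LinearIndepOn k g I) :
    Module.finrank k (span k (range f)) + Module.finrank k (span k (range g)) ≤
      Fintype.card ι := by
  classical
  obtain ⟨B, hB⟩ := M.exists_isBase
  have hBd : M✶.IsBase Bᶜ := by simpa [hE, compl_eq_univ_sdiff] using hB.compl_isBase_dual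
  rw [← hB.span_image_eq hE hf, ← hBd.span_image_eq (by rw [dual_ground, hE]) hg,
    image_eq_range, image_eq_range]
  have hf_le : Module.finrank k (span k (range fun i : B ↦ f i)) ≤ Fintype.card B :=
    finrank_range_le_card _
  have hg_le : Module.finrank k (span k (range fun i : (Bᶜ : Set ι) ↦ g i)) ≤ Fintype.card ↥Bᶜ :=
    finrank_range_le_card _
  have hcard_compl := Fintype.card_compl_set B
  have hcard_le := set_fintype_card_le_univ B
  omega

lemma disjoint_span_range [Fintype ι] (hE : M.E = univ)
    (hf : ∀ I, M.Indep I ↔ LinearIndepOn k f I) (hg : ∀ I, M✶.Indep I ↔ LinearIndepOn k g I)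
    {v : ι → V} (hv : LinearIndependent k v)
    (hvfg : span k (range v) ≤ span k (range f) ⊔ span k (range g)) :
    Disjoint (span k (range f)) (span k (range g)) := by
  have := FiniteDimensional.span_of_finite k (finite_range f)
  have := FiniteDimensional.span_of_finite k (finite_range g)
  have hsup := Submodule.finrank_mono hvfg
  rw [finrank_span_eq_card hv] at hsup
  have hsum := Submodule.finrank_sup_add_finrank_inf_eq (span k (range f)) (span k (range g))
  have hle := finrank_span_range_add_finrank_span_range_le hE hf hg
  rw [disjoint_iff, ← Submodule.finrank_eq_zero]
  omega

end Matroid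

lemma Submodule.mem_of_mem_sup_of_disjoint {R W : Type*} [Ring R] [AddCommGroup W] [Module R W]
    {P Q U₁ U₂ : Submodule R W} (hPQ : Disjoint P Q) (h₁ : U₁ ≤ P) (h₂ : U₂ ≤ Q) {x : W}
    (hx : x ∈ U₁ ⊔ U₂) (hxQ : x ∈ Q) : x ∈ U₂ := by
  obtain ⟨u, hu, v, hv, rfl⟩ := mem_sup.1 hx
  have hu0 : u = 0 :=
    disjoint_def.1 hPQ u (h₁ hu) (by simpa using Q.sub_mem hxQ (h₂ hv))
  simpa [hu0] using hv

namespace MvPolynomial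

variable {σ k : Type*} [Field k] {T : Set (MvPolynomial σ k)}

/-- Choosing a projection `π` onto `span k T`, the substitution `Xⱼ ↦ Xⱼ - π Xⱼ` kills `T`
and is the identity modulo `T`, so its kernel is the ideal generated by `T`. -/
lemma exists_algHom_ker_eq_span (hT : T ⊆ homogeneousSubmodule σ k 1) :
    ∃ φ : MvPolynomial σ k →ₐ[k] MvPolynomial σ k, RingHom.ker φ = Ideal.span T ∧
      ∀ h ∈ homogeneousSubmodule σ k 1, h - φ h ∈ Submodule.span k T := by
  set U := Submodule.span k T
  obtain ⟨U', hUU'⟩ := U.exists_isCompl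
  set π := U.subtype ∘ₗ U.projectionOnto U' hUU'
  have hπU : ∀ x, π x ∈ U := fun x ↦ (U.projectionOnto U' hUU' x).2
  have hπ_id : ∀ u ∈ U, π u = u := fun u hu ↦
    congrArg Subtype.val (projectionOnto_apply_left hUU' ⟨u, hu⟩)
  set φ : MvPolynomial σ k →ₐ[k] MvPolynomial σ k := aeval fun j ↦ X j - π (X j)
  have hφ_linear : ∀ h ∈ homogeneousSubmodule σ k 1, φ h = h - π h := by
    intro h hh
    rw [homogeneousSubmodule_one_eq_span_X] at hh
    induction hh using Submodule.span_induction with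
    | mem x hx => obtain ⟨j, rfl⟩ := hx; simp [φ]
    | zero => simp
    | add x y _ _ hx hy => rw [map_add, map_add, hx, hy]; abel
    | smul c x _ hx => rw [map_smul, map_smul, hx, smul_sub]
  have hUI : ∀ u ∈ U, u ∈ Ideal.span T := fun u hu ↦
    Submodule.span_le_restrictScalars k _ T hu
  have hsub_mem : ∀ p, p - φ p ∈ Ideal.span T := by
    intro p
    induction p using MvPolynomial.induction_on with
    | C a => simp [φ, algebraMap_eq]
    | add p q hp hq => simpa [add_sub_add_comm] using Ideal.add_mem _ hp hq
    | mul_X p j hp =>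
      have : p * X j - φ (p * X j) = p * π (X j) + (p - φ p) * (X j - π (X j)) := by
        simp [φ]; ring
      rw [this]
      exact Ideal.add_mem _ (Ideal.mul_mem_left _ _ (hUI _ (hπU _))) (Ideal.mul_mem_right _ _ hp)
  refine ⟨φ, le_antisymm (fun p hp ↦ by simpa [RingHom.mem_ker.1 hp] using hsub_mem p) ?_,
    fun h hh ↦ by simpa [hφ_linear h hh] using hπU h⟩
  refine Ideal.span_le.2 fun t ht ↦ ?_
  simp [RingHom.mem_ker, hφ_linear t (hT ht), hπ_id t (subset_span ht)]

lemma isPrime_span_of_subset_homogeneousSubmodule_one (hT : T ⊆ homogeneousSubmodule σ k 1) :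
    (Ideal.span T).IsPrime := by
  obtain ⟨φ, hker, -⟩ := exists_algHom_ker_eq_span hT
  exact hker ▸ RingHom.ker_isPrime φ

lemma mem_span_of_mem_ideal_span (hT : T ⊆ homogeneousSubmodule σ k 1) {h : MvPolynomial σ k}
    (hh : h ∈ homogeneousSubmodule σ k 1) (hhT : h ∈ Ideal.span T) : h ∈ Submodule.span k T := by
  obtain ⟨φ, hker, hφ⟩ := exists_algHom_ker_eq_span hT
  rw [← hker, RingHom.mem_ker] at hhT
  simpa [hhT] using hφ h hh

end MvPolynomial

section IdealCover

variable {R β : Type*} [CommRing R] {I : Ideal R} {S : Set β} {p : β → Ideal R}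

lemma Ideal.minimalPrimes_eq_of_forall_le (hprime : ∀ b ∈ S, (p b).IsPrime)
    (hle : ∀ b ∈ S, I ≤ p b) (hcover : ∀ q : Ideal R, q.IsPrime → I ≤ q → ∃ b ∈ S, p b ≤ q)
    (hmin : ∀ b ∈ S, ∀ q : Ideal R, q.IsPrime → I ≤ q → q ≤ p b → p b ≤ q) :
    I.minimalPrimes = {q | ∃ b ∈ S, q = p b} := by
  ext q
  simp only [Ideal.minimalPrimes, mem_ofPred_eq]
  refine ⟨fun hq ↦ ?_, ?_⟩
  · obtain ⟨b, hb, hbq⟩ := hcover q hq.prop.1 hq.prop.2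
    exact ⟨b, hb, le_antisymm (hq.2 ⟨hprime b hb, hle b hb⟩ hbq) hbq⟩
  · rintro ⟨b, hb, rfl⟩
    exact ⟨⟨hprime b hb, hle b hb⟩, fun q hq hqb ↦ hmin b hb q hq.1 hq.2 hqb⟩

lemma PrimeSpectrum.zeroLocus_eq_biUnion_of_forall_le (hle : ∀ b ∈ S, I ≤ p b)
    (hcover : ∀ q : Ideal R, q.IsPrime → I ≤ q → ∃ b ∈ S, p b ≤ q) :
    zeroLocus (I : Set R) = ⋃ b ∈ S, zeroLocus (p b : Set R) := by
  ext x
  simp only [mem_iUnion, mem_zeroLocus, SetLike.coe_subset_coe, exists_prop]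
  exact ⟨hcover x.asIdeal x.isPrime, fun ⟨b, hb, hbx⟩ ↦ (hle b hb).trans hbx⟩

lemma Ideal.span_range_mul_le_span_image_union {R ι : Type*} [CommSemiring R] (f g : ι → R)
    (F : Set ι) : Ideal.span (range fun i ↦ f i * g i) ≤ Ideal.span (f '' F ∪ g '' Fᶜ) := by
  refine Ideal.span_le.2 (range_subset_iff.2 fun i ↦ ?_)
  by_cases hi : i ∈ F
  · exact Ideal.mul_mem_right _ _ (Ideal.subset_span (Or.inl ⟨i, hi, rfl⟩))
  · exact Ideal.mul_mem_left _ _ (Ideal.subset_span (Or.inr ⟨i, hi, rfl⟩))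

end IdealCover

lemma exists_isCyclicFlat_span_image_union_le {ι k R : Type*} [Field k] [CommRing R]
    [Algebra k R] {M : Matroid ι} {f g : ι → R} (hE : M.E = univ)
    (hf : ∀ I, M.Indep I ↔ LinearIndepOn k f I) (hg : ∀ I, M✶.Indep I ↔ LinearIndepOn k g I)
    {q : Ideal R} (hq : q.IsPrime) (hpairs : Ideal.span (range fun i ↦ f i * g i) ≤ q) :
    ∃ F, IsCyclicFlat M F ∧ Ideal.span (f '' F ∪ g '' Fᶜ) ≤ q := by
  have hcover : M.E ⊆ f ⁻¹' q ∪ g ⁻¹' q := fun i _ ↦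
    hq.mem_or_mem (hpairs (Ideal.subset_span ⟨i, rfl⟩))
  obtain ⟨F, hF, hFf, hFg⟩ := exists_isCyclicFlat_between
    (Matroid.isFlat_preimage hE hf (q.restrictScalars k))
    (Matroid.isFlat_preimage (by rw [Matroid.dual_ground, hE]) hg (q.restrictScalars k)) hcover
  rw [hE, ← compl_eq_univ_sdiff] at hFg
  exact ⟨F, hF, Ideal.span_le.2 (union_subset (image_subset_iff.2 hFf) (image_subset_iff.2 hFg))⟩

section IdealOfPairs

variable {σ ι k : Type*} [Field k] {M : Matroid ι} {f g : ι → MvPolynomial σ k}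

lemma image_union_image_subset_homogeneousSubmodule_one (hf1 : ∀ i, (f i).IsHomogeneous 1)
    (hg1 : ∀ i, (g i).IsHomogeneous 1) (F G : Set ι) :
    f '' F ∪ g '' G ⊆ homogeneousSubmodule σ k 1 :=
  union_subset (image_subset_iff.2 fun i _ ↦ hf1 i) (image_subset_iff.2 fun i _ ↦ hg1 i)

lemma span_image_union_le_of_isCyclicFlat (hE : M.E = univ)
    (hf : ∀ I, M.Indep I ↔ LinearIndepOn k f I) (hg : ∀ I, M✶.Indep I ↔ LinearIndepOn k g I)
    (hf1 : ∀ i, (f i).IsHomogeneous 1) (hg1 : ∀ i, (g i).IsHomogeneous 1)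
    (hfg : Disjoint (span k (range f)) (span k (range g))) {F : Set ι} (hF : IsCyclicFlat M F)
    {q : Ideal (MvPolynomial σ k)} (hq : q.IsPrime)
    (hpairs : Ideal.span (range fun i ↦ f i * g i) ≤ q)
    (hqF : q ≤ Ideal.span (f '' F ∪ g '' Fᶜ)) : Ideal.span (f '' F ∪ g '' Fᶜ) ≤ q := by
  have hT := image_union_image_subset_homogeneousSubmodule_one hf1 hg1 F Fᶜ
  have hlinear : ∀ h ∈ homogeneousSubmodule σ k 1, h ∈ q →
      h ∈ span k (f '' F) ⊔ span k (g '' Fᶜ) := fun h hh hhq ↦ by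
    rw [← span_union]; exact mem_span_of_mem_ideal_span hT hh (hqF hhq)
  have hpair : ∀ i, f i ∈ q ∨ g i ∈ q := fun i ↦
    hq.mem_or_mem (hpairs (Ideal.subset_span ⟨i, rfl⟩))
  refine Ideal.span_le.2 (union_subset ?_ ?_)
  · rintro _ ⟨i, hi, rfl⟩
    refine (hpair i).resolve_right fun hgi ↦ hF.notMem_dual_closure_sdiff hi ?_
    rw [Matroid.mem_closure_iff_mem_span (by rw [Matroid.dual_ground, hE]) hg, hE,
      ← compl_eq_univ_sdiff]
    exact mem_of_mem_sup_of_disjoint hfg (span_mono (image_subset_range _ _))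
      (span_mono (image_subset_range _ _)) (hlinear _ (hg1 i) hgi) (subset_span ⟨i, rfl⟩)
  · rintro _ ⟨j, hj, rfl⟩
    refine (hpair j).resolve_left fun hfj ↦ hj ?_
    rw [← hF.1.closure, Matroid.mem_closure_iff_mem_span hE hf]
    exact mem_of_mem_sup_of_disjoint hfg.symm (span_mono (image_subset_range _ _))
      (span_mono (image_subset_range _ _)) (sup_comm (span k (f '' F)) _ ▸ hlinear _ (hf1 j) hfj)
      (subset_span ⟨j, rfl⟩)

end IdealOfPairs

theorem minimalPrimes_idealOfPairs_general
    (k : Type) [Field k] (n : ℕ)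
    (M : Matroid (Fin n)) (hE : M.E = Set.univ)
    (f g : Fin n → MvPolynomial (Fin n) k)
    (hf1 : ∀ i, (f i).IsHomogeneous 1) (hg1 : ∀ i, (g i).IsHomogeneous 1)
    -- `f` realizes `M` and `g` realizes the dual matroid `M✶`:
    (hM : ∀ I : Set (Fin n), M.Indep I ↔ LinearIndependent k (fun i : I => f i))
    (hMd : ∀ I : Set (Fin n), M✶.Indep I ↔ LinearIndependent k (fun i : I => g i))
    -- the `f i` and `g i` together span the space of linear forms, i.e. `S = k[W ⊕ W^⊥]`:
    (hspan : ∀ j : Fin n, (X j : MvPolynomial (Fin n) k)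
      ∈ Submodule.span k (Set.range f ∪ Set.range g))
    -- the ideal of pairs:
    (𝔞 : Ideal (MvPolynomial (Fin n) k))
    (h𝔞 : 𝔞 = Ideal.span (Set.range fun i => f i * g i)) :
    𝔞.minimalPrimes
      = {p : Ideal (MvPolynomial (Fin n) k) |
          ∃ F : Set (Fin n), IsCyclicFlat M F ∧ p = Ideal.span (f '' F ∪ g '' Fᶜ)} ∧
    PrimeSpectrum.zeroLocus (𝔞 : Set (MvPolynomial (Fin n) k))
      = ⋃ F ∈ {F : Set (Fin n) | IsCyclicFlat M F},
          PrimeSpectrum.zeroLocus ((Ideal.span (f '' F ∪ g '' Fᶜ) : Ideal (MvPolynomial (Fin n) k)) : Set (MvPolynomial (Fin n) k)) := by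
  subst h𝔞
  have hfg : Disjoint (span k (range f)) (span k (range g)) :=
    Matroid.disjoint_span_range hE hM hMd (linearIndependent_X (Fin n) k) <|
      span_le.2 <| range_subset_iff.2 fun j ↦ by rw [← span_union]; exact hspan j
  have hprime : ∀ F : Set (Fin n), (Ideal.span (f '' F ∪ g '' Fᶜ)).IsPrime := fun F ↦
    isPrime_span_of_subset_homogeneousSubmodule_one <|
      image_union_image_subset_homogeneousSubmodule_one hf1 hg1 F Fᶜ
  have hle := fun F (_ : IsCyclicFlat M F) ↦ Ideal.span_range_mul_le_span_image_union f g F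
  have hcover := fun q (hq : Ideal.IsPrime q) ↦ exists_isCyclicFlat_span_image_union_le hE hM hMd hq
  exact ⟨Ideal.minimalPrimes_eq_of_forall_le (fun F _ ↦ hprime F) hle hcover
      fun F hF q hq ↦ span_image_union_le_of_isCyclicFlat hE hM hMd hf1 hg1 hfg hF hq,
    PrimeSpectrum.zeroLocus_eq_biUnion_of_forall_le hle hcover⟩

/-- With `W` a realization of a matroid `M` and `𝔞 = (f 1 g 1, …, f n g n)`
the ideal of pairs of `W`, the minimal primes of `S/𝔞` are exactly the ideals
`𝔭_{F,F^∁} = (f i : i ∈ F) + (g j : j ∉ F)` as `F` ranges over the cyclic flats of `M`.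
Consequently `V(𝔞) = ⋃_{F ∈ cyc(M)} V(𝔭_{F,F^∁})`. -/
theorem minimalPrimes_idealOfPairs
    (k : Type) [Field k] (n r : ℕ)
    (M : Matroid (Fin n)) (hE : M.E = Set.univ)
    (hloopless : ∀ i : Fin n, M.Indep {i})
    (f g : Fin n → MvPolynomial (Fin n) k)
    (hf1 : ∀ i, (f i).IsHomogeneous 1) (hg1 : ∀ i, (g i).IsHomogeneous 1)
    -- `f` realizes `M` and `g` realizes the dual matroid `M✶`:
    (hM : ∀ I : Set (Fin n), M.Indep I ↔ LinearIndependent k (fun i : I => f i))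
    (hMd : ∀ I : Set (Fin n), M✶.Indep I ↔ LinearIndependent k (fun i : I => g i))
    -- the `f i` and `g i` together span the space of linear forms, i.e. `S = k[W ⊕ W^⊥]`:
    (hspan : ∀ j : Fin n, (X j : MvPolynomial (Fin n) k)
      ∈ Submodule.span k (Set.range f ∪ Set.range g))
    -- the ideal of pairs:
    (𝔞 : Ideal (MvPolynomial (Fin n) k))
    (h𝔞 : 𝔞 = Ideal.span (Set.range fun i => f i * g i)) :
    𝔞.minimalPrimes
      = {p : Ideal (MvPolynomial (Fin n) k) |
          ∃ F : Set (Fin n), IsCyclicFlat M F ∧ p = Ideal.span (f '' F ∪ g '' Fᶜ)} ∧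
    PrimeSpectrum.zeroLocus (𝔞 : Set (MvPolynomial (Fin n) k))
      = ⋃ F ∈ {F : Set (Fin n) | IsCyclicFlat M F},
          PrimeSpectrum.zeroLocus ((Ideal.span (f '' F ∪ g '' Fᶜ) : Ideal (MvPolynomial (Fin n) k)) : Set (MvPolynomial (Fin n) k)) :=
  minimalPrimes_idealOfPairs_general k n M hE f g hf1 hg1 hM hMd hspan 𝔞 h𝔞
end

section
/- Let M = U_{r,n} be the uniform matroid of rank r on [n], realized by W ⊆ k^n with coordinate forms f₁,…,fₙ on W and g₁,…,gₙ on W^⊥, and let 𝔞 = (f₁g₁,…,fₙgₙ). Then for all indices i₁,…,i_r, a ∈ [n] (not necessarily distinct), the product g_{i₁}⋯g_{i_r}·f_a lies in 𝔞. -/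
/-!
Write the product as `∏_{b ∈ s} g b` for a multiset `s` of size `r`. If `a ∈ s`, the product
contains the generator `f a * g a`. If `s` has no repeats, it is a basis of `U_{r,n}`, so `f a` is
a combination of the `f b`, `b ∈ s`, which reduces to the first case. Otherwise some `b` repeats
in `s`; the at least `n - r` indices outside `s` span the dual matroid `U_{n-r,n}`, so `g b` is a
combination of the `g x` with `x ∉ s`, and trading one copy of `b` for such an `x` gains a new
distinct element. This exchange terminates after at most `r` steps.
-/

open Submodule

theorem Ideal.mul_mem_of_mem_span {k S : Type*} [CommSemiring k] [CommSemiring S] [Algebra k S]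
    {I : Ideal S} {s : Set S} {x y : S} (hx : x ∈ Submodule.span k s) (hs : ∀ z ∈ s, z * y ∈ I) :
    x * y ∈ I := by
  have hle : Submodule.span k s ≤ (I.restrictScalars k).comap (LinearMap.mulRight k y) :=
    Submodule.span_le.2 hs
  exact hle hx

namespace Matroid

variable {α : Type*} {M : Matroid α} {r : ℕ}

theorem mem_span_image_of_le_card {k V : Type*} [Field k] [AddCommGroup V] [Module k V]
    {v : α → V} (hv : ∀ I, M.Indep I ↔ LinearIndepOn k v I)
    (hU : ∀ I, M.Indep I ↔ I.ncard ≤ r) {T : Finset α} (hT : r ≤ T.card) (a : α) :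
    v a ∈ span k (v '' T) := by
  classical
  obtain ⟨T', hT'T, hT'r⟩ := Finset.exists_subset_card_eq hT
  refine span_mono (Set.image_mono (Finset.coe_subset.2 hT'T)) ?_
  by_cases ha : a ∈ T'
  · exact subset_span ⟨a, ha, rfl⟩
  have hindep : M.Indep T' := (hU _).2 (by simp [hT'r])
  have hdep : ¬ M.Indep (insert a T') := by
    rw [hU, ← Finset.coe_insert, Set.ncard_coe_finset, Finset.card_insert_of_notMem ha]
    omega
  rw [hv, linearIndepOn_insert (by simpa using ha)] at hdep
  exact not_not.1 fun h => hdep ⟨(hv _).1 hindep, h⟩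

variable [Finite α]

theorem isBase_iff_ncard_eq_min (hU : ∀ I, M.Indep I ↔ I.ncard ≤ r) {B : Set α} :
    M.IsBase B ↔ B.ncard = min r (Nat.card α) := by
  have hle : ∀ I : Set α, I.ncard ≤ Nat.card α := fun I => by
    simpa using Set.ncard_le_ncard (Set.subset_univ I)
  rw [isBase_iff_maximal_indep]
  constructor
  · rintro ⟨hB, hmax⟩
    have hBr := (hU B).1 hB
    by_contra hne
    have hBn : B.ncard < Nat.card α := by have := hle B; omega
    obtain ⟨x, hx⟩ : ∃ x, x ∉ B := by
      by_contra! h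
      simp [Set.eq_univ_of_forall h] at hBn
    have hxB : insert x B ⊆ B :=
      hmax ((hU _).2 (by rw [Set.ncard_insert_of_notMem hx]; omega)) (Set.subset_insert x B)
    exact hx (hxB (Set.mem_insert x B))
  · intro hB
    refine ⟨(hU B).2 (by omega), fun I hI hBI => ?_⟩
    have := (hU I).1 hI
    have := hle I
    exact (Set.eq_of_subset_of_ncard_le hBI (by omega)).symm.subset

theorem dual_indep_iff_ncard_le (hE : M.E = Set.univ) (hU : ∀ I, M.Indep I ↔ I.ncard ≤ r)
    {A : Set α} : M✶.Indep A ↔ A.ncard ≤ Nat.card α - r := by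
  simp only [dual_indep_iff_exists', hE, Set.subset_univ, true_and, isBase_iff_ncard_eq_min hU]
  constructor
  · rintro ⟨B, hB, hAB⟩
    have := Set.ncard_union_eq hAB
    have := Set.ncard_le_ncard (Set.subset_univ (A ∪ B))
    simp only [Set.ncard_univ] at this
    omega
  · intro hA
    have := Set.ncard_compl A
    obtain ⟨B, hBA, hB⟩ := Set.exists_subset_card_eq (s := Aᶜ) (n := min r (Nat.card α))
      (by omega)
    exact ⟨B, hB, Set.disjoint_of_subset_right hBA disjoint_compl_right⟩

end Matroid

section Pairs

variable {k S α : Type*} [CommSemiring k] [CommSemiring S] [Algebra k S]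
  {f g : α → S} {I : Ideal S}

theorem prod_map_mul_mem_of_mem (hfg : ∀ i, f i * g i ∈ I) {s : Multiset α} {a : α}
    (ha : a ∈ s) : (s.map g).prod * f a ∈ I := by
  obtain ⟨t, rfl⟩ := Multiset.exists_cons_of_mem ha
  rw [Multiset.map_cons, Multiset.prod_cons, mul_right_comm, mul_comm (g a)]
  exact I.mul_mem_right _ (hfg a)

variable [Fintype α] [DecidableEq α] {r : ℕ}

theorem prod_map_mul_mem_of_spanning (hfg : ∀ i, f i * g i ∈ I)
    (hf : ∀ T : Finset α, r ≤ T.card → ∀ a, f a ∈ span k (f '' T))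
    (hg : ∀ T : Finset α, Fintype.card α - r ≤ T.card → ∀ b, g b ∈ span k (g '' T))
    (s : Multiset α) (hs : Multiset.card s = r) (a : α) : (s.map g).prod * f a ∈ I := by
  by_cases ha : a ∈ s
  · exact prod_map_mul_mem_of_mem hfg ha
  by_cases hnd : s.Nodup
  · rw [mul_comm]
    refine Ideal.mul_mem_of_mem_span
      (hf s.toFinset (by rw [Multiset.toFinset_card_of_nodup hnd, hs]) a) ?_
    rintro _ ⟨x, hx, rfl⟩
    rw [mul_comm]
    exact prod_map_mul_mem_of_mem hfg (Multiset.mem_toFinset.1 hx)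
  obtain ⟨b, t, rfl⟩ : ∃ b t, s = b ::ₘ b ::ₘ t := by
    simpa [Multiset.nodup_iff_ne_cons_cons] using hnd
  have hcompl : Fintype.card α - r ≤ (b ::ₘ b ::ₘ t).toFinsetᶜ.card := by
    rw [Finset.card_compl, ← hs]
    have := Multiset.toFinset_card_le (b ::ₘ b ::ₘ t)
    omega
  rw [Multiset.map_cons, Multiset.prod_cons, mul_assoc]
  refine Ideal.mul_mem_of_mem_span (hg _ hcompl b) ?_
  rintro _ ⟨x, hx, rfl⟩
  -- `hgrow` and `hrepeat` are what the termination proof needs.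
  have hdup : (b ::ₘ b ::ₘ t).toFinset = (b ::ₘ t).toFinset := by simp
  have hgrow : (x ::ₘ b ::ₘ t).toFinset.card = (b ::ₘ b ::ₘ t).toFinset.card + 1 := by
    rw [hdup, Multiset.toFinset_cons x, Finset.card_insert_of_notMem]
    simpa [hdup, and_comm] using hx
  have hrepeat : (b ::ₘ b ::ₘ t).toFinset.card < r := by
    have := Multiset.toFinset_card_le (b ::ₘ t)
    rw [hdup, ← hs]
    simp only [Multiset.card_cons] at this ⊢
    omega
  rw [← mul_assoc, ← Multiset.prod_cons, ← Multiset.map_cons]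
  exact prod_map_mul_mem_of_spanning hfg hf hg (x ::ₘ b ::ₘ t) (by simpa using hs) a
termination_by r - s.toFinset.card
decreasing_by
  subst_vars; omega

end Pairs

/-- Let `M = U_{r,n}` be the uniform matroid of rank `r` on `[n]`,
realized by `W ⊆ k^n` with coordinate linear forms `f 1, …, f n` on `W` and
`g 1, …, g n` on `W^⊥` (realizing the dual matroid), and let
`𝔞 = (f 1 * g 1, …, f n * g n)` in `S = k[W ⊕ W^⊥]`.  Then for all indices
`i 1, …, i r, a ∈ [n]` (not necessarily distinct), `g (i 1) ⋯ g (i r) * f a ∈ 𝔞`. -/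
theorem uniform_product_mem_idealOfPairs
    (k : Type) [Field k] (S : Type) [CommRing S] [Algebra k S]
    (n r : ℕ)
    (M : Matroid (Fin n)) (hE : M.E = Set.univ)
    -- `M` is the uniform matroid `U_{r,n}`:
    (hU : ∀ I : Set (Fin n), M.Indep I ↔ I.ncard ≤ r)
    (f g : Fin n → S)
    -- `f` realizes `M` and `g` realizes the dual matroid `M✶`:
    (hM : ∀ I : Set (Fin n), M.Indep I ↔ LinearIndependent k (fun i : I => f i))
    (hMd : ∀ I : Set (Fin n), M✶.Indep I ↔ LinearIndependent k (fun i : I => g i))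
    -- the ideal of pairs:
    (𝔞 : Ideal S) (h𝔞 : 𝔞 = Ideal.span (Set.range fun i => f i * g i)) :
    ∀ (idx : Fin r → Fin n) (a : Fin n),
      (∏ j : Fin r, g (idx j)) * f a ∈ 𝔞 := by
  intro idx a
  have hfg : ∀ i, f i * g i ∈ 𝔞 := fun i => h𝔞 ▸ Ideal.subset_span ⟨i, rfl⟩
  have hf (T : Finset (Fin n)) (hT : r ≤ T.card) :=
    M.mem_span_image_of_le_card hM hU hT
  have hg (T : Finset (Fin n)) (hT : Fintype.card (Fin n) - r ≤ T.card) :=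
    M✶.mem_span_image_of_le_card hMd (fun _ => M.dual_indep_iff_ncard_le hE hU)
      (by simpa using hT)
  rw [Finset.prod_eq_multiset_prod, show (fun j => g (idx j)) = g ∘ idx from rfl,
    ← Multiset.map_map]
  exact prod_map_mul_mem_of_spanning hfg hf hg _ (by simp) a
end

section
/- Let M be a loopless and coloopless matroid realized by W, with ideal of pairs 𝔞 ⊆ S. Then the ideals 𝔭_{[n],∅} = (f₁,…,fₙ) and 𝔭_{∅,[n]} = (g₁,…,gₙ) are minimal primes of S/𝔞. -/
/-!
A family `h` of linear forms generates a prime ideal, and a linear form lies in that ideal only if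
it lies in the `k`-span of `h`: after projecting the linear forms onto `span h`, the ideal is the
kernel of the substitution `X j ↦ X j - π (X j)`. Realizations of `M` and `M✶` have ranks adding
up to `n`, while together they span all `n` variables, so `span f ⊓ span g = ⊥`. Hence no `g i`
(nonzero, as `M` has no coloops) lies in `(f)`, and a prime `Q` with `𝔞 ≤ Q ≤ (f)` contains each
`f i` because `f i * g i ∈ Q` and `g i ∉ Q`.
-/

open MvPolynomial Set

namespace MvPolynomial

variable {σ ι k : Type*} [Field k]

lemma aeval_X_sub_apply_of_isHomogeneous_one (π : MvPolynomial σ k →ₗ[k] MvPolynomial σ k)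
    {p : MvPolynomial σ k} (hp : p.IsHomogeneous 1) :
    aeval (fun j => X j - π (X j)) p = p - π p := by
  have hp' : p ∈ Submodule.span k (range X) := by
    rwa [← homogeneousSubmodule_one_eq_span_X]
  refine LinearMap.eqOn_span (f := (aeval fun j => X j - π (X j)).toLinearMap)
    (g := LinearMap.id - π) ?_ hp'
  rintro _ ⟨j, rfl⟩
  simp

variable {h : ι → MvPolynomial σ k}

lemma exists_algHom_ker_eq_span_of_isHomogeneous_one (hh : ∀ i, (h i).IsHomogeneous 1) :
    ∃ φ : MvPolynomial σ k →ₐ[k] MvPolynomial σ k, RingHom.ker φ = Ideal.span (range h) ∧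
      ∀ p : MvPolynomial σ k, p.IsHomogeneous 1 → p - φ p ∈ Submodule.span k (range h) := by
  set V := Submodule.span k (range h)
  obtain ⟨ρ, hρ⟩ := V.subtype.exists_leftInverse_of_injective V.ker_subtype
  set π := V.subtype ∘ₗ ρ
  have hπV : ∀ p, π p ∈ V := fun p => (ρ p).2
  have hπh : ∀ i, π (h i) = h i := fun i => by
    simpa [π] using
      congrArg Subtype.val (LinearMap.congr_fun hρ ⟨h i, Submodule.subset_span ⟨i, rfl⟩⟩)
  refine ⟨aeval fun j => X j - π (X j), le_antisymm ?_ ?_, fun p hp => ?_⟩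
  · have hmk : (Ideal.Quotient.mkₐ k (Ideal.span (range h))).comp (aeval fun j => X j - π (X j))
        = Ideal.Quotient.mkₐ k (Ideal.span (range h)) := by
      refine algHom_ext fun j => ?_
      have : π (X j) ∈ Ideal.span (range h) := Submodule.span_le_restrictScalars k _ _ (hπV _)
      simp [Ideal.Quotient.eq_zero_iff_mem.2 this]
    intro p hp
    rw [← Ideal.Quotient.eq_zero_iff_mem, ← Ideal.Quotient.mkₐ_eq_mk k, ← hmk, AlgHom.comp_apply,
      RingHom.mem_ker.1 hp, map_zero]
  · rw [Ideal.span_le]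
    rintro _ ⟨i, rfl⟩
    rw [SetLike.mem_coe, RingHom.mem_ker, aeval_X_sub_apply_of_isHomogeneous_one π (hh i), hπh,
      sub_self]
  · rw [aeval_X_sub_apply_of_isHomogeneous_one π hp, sub_sub_cancel]
    exact hπV p

lemma isPrime_span_of_isHomogeneous_one (hh : ∀ i, (h i).IsHomogeneous 1) :
    (Ideal.span (range h)).IsPrime := by
  obtain ⟨φ, hker, -⟩ := exists_algHom_ker_eq_span_of_isHomogeneous_one hh
  exact hker ▸ RingHom.ker_isPrime φ

lemma mem_span_of_isHomogeneous_one_of_mem_ideal_span (hh : ∀ i, (h i).IsHomogeneous 1)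
    {p : MvPolynomial σ k} (hp : p.IsHomogeneous 1) (hpI : p ∈ Ideal.span (range h)) :
    p ∈ Submodule.span k (range h) := by
  obtain ⟨φ, hker, hφ⟩ := exists_algHom_ker_eq_span_of_isHomogeneous_one hh
  rw [← hker, RingHom.mem_ker] at hpI
  simpa [hpI] using hφ p hp

lemma notMem_ideal_span_of_disjoint {κ : Type*} {v : κ → MvPolynomial σ k}
    (hh : ∀ i, (h i).IsHomogeneous 1) (hv : ∀ j, (v j).IsHomogeneous 1) (hv0 : ∀ j, v j ≠ 0)
    (hdisj : Disjoint (Submodule.span k (range h)) (Submodule.span k (range v))) (j : κ) :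
    v j ∉ Ideal.span (range h) := fun hj =>
  hv0 j <| hdisj.le_bot
    ⟨mem_span_of_isHomogeneous_one_of_mem_ideal_span hh (hv j) hj, Submodule.subset_span ⟨j, rfl⟩⟩

lemma card_le_finrank_of_forall_X_mem [Fintype σ] {U : Submodule k (MvPolynomial σ k)}
    [FiniteDimensional k U] (hU : ∀ j, X j ∈ U) : Fintype.card σ ≤ Module.finrank k U := by
  rw [← finrank_span_eq_card (linearIndependent_X σ k)]
  exact Submodule.finrank_mono (Submodule.span_le.2 (range_subset_iff.2 hU))

end MvPolynomial

lemma Submodule.disjoint_of_finrank_add_finrank_le {K V : Type*} [DivisionRing K] [AddCommGroup V]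
    [Module K V] {s t : Submodule K V} [FiniteDimensional K s] [FiniteDimensional K t]
    (h : Module.finrank K s + Module.finrank K t ≤ Module.finrank K ↥(s ⊔ t)) : Disjoint s t := by
  have := s.finrank_sup_add_finrank_inf_eq t
  rw [disjoint_iff, ← Submodule.finrank_eq_zero]
  omega

namespace Matroid

variable {α k V : Type*} [Field k] [AddCommGroup V] [Module k V] {M : Matroid α} {f : α → V}

lemma span_range_eq_span_image_of_isBase
    (hM : ∀ I : Set α, M.Indep I ↔ LinearIndependent k (fun i : I => f i))
    {B : Set α} (hB : M.IsBase B) :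
    Submodule.span k (range f) = Submodule.span k (f '' B) := by
  refine le_antisymm (Submodule.span_le.2 ?_) (Submodule.span_mono (image_subset_range f B))
  rintro _ ⟨i, rfl⟩
  by_contra hi
  have hiB : i ∉ B := fun hiB => hi (Submodule.subset_span ⟨i, hiB, rfl⟩)
  have hins : LinearIndepOn k f (insert i B) :=
    (linearIndepOn_insert hiB).2 ⟨(hM B).1 hB.indep, hi⟩
  exact hiB (hB.mem_of_insert_indep ((hM _).2 hins))

lemma finrank_span_range_eq_ncard_of_isBase [Finite α]
    (hM : ∀ I : Set α, M.Indep I ↔ LinearIndependent k (fun i : I => f i))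
    {B : Set α} (hB : M.IsBase B) :
    Module.finrank k (Submodule.span k (range f)) = B.ncard := by
  have := Fintype.ofFinite B
  rw [span_range_eq_span_image_of_isBase hM hB, image_eq_range,
    finrank_span_eq_card ((hM B).1 hB.indep), ← Nat.card_eq_fintype_card, Nat.card_coe_set_eq]

lemma finrank_span_range_add_finrank_span_range_dual [Finite α] (hE : M.E = univ) {g : α → V}
    (hM : ∀ I : Set α, M.Indep I ↔ LinearIndependent k (fun i : I => f i))
    (hMd : ∀ I : Set α, M✶.Indep I ↔ LinearIndependent k (fun i : I => g i)) :
    Module.finrank k (Submodule.span k (range f)) + Module.finrank k (Submodule.span k (range g))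
      = Nat.card α := by
  obtain ⟨B, hB⟩ := M.exists_isBase
  have hBd : M✶.IsBase Bᶜ := by simpa [hE, compl_eq_univ_sdiff] using hB.compl_isBase_dual
  rw [finrank_span_range_eq_ncard_of_isBase hM hB, finrank_span_range_eq_ncard_of_isBase hMd hBd,
    ncard_add_ncard_compl]

end Matroid

lemma Ideal.span_range_mem_minimalPrimes_span_range_mul {R ι : Type*} [CommRing R] {f g : ι → R}
    (hf : (Ideal.span (range f)).IsPrime) (hg : ∀ i, g i ∉ Ideal.span (range f)) :
    Ideal.span (range f) ∈ (Ideal.span (range fun i => f i * g i)).minimalPrimes := by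
  refine ⟨⟨hf, Ideal.span_le.2 ?_⟩, fun Q ⟨hQ, hle⟩ hQf => Ideal.span_le.2 ?_⟩
  · rintro _ ⟨i, rfl⟩
    exact Ideal.mul_mem_right _ _ (Ideal.subset_span ⟨i, rfl⟩)
  · rintro _ ⟨i, rfl⟩
    exact (hQ.mem_or_mem (hle (Ideal.subset_span ⟨i, rfl⟩))).resolve_right fun hgQ => hg i (hQf hgQ)

theorem span_f_and_span_g_minimalPrimes_general
    (k : Type) [Field k] (n : ℕ)
    (M : Matroid (Fin n)) (hE : M.E = Set.univ)
    (hloopless : ∀ i : Fin n, M.Indep {i})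
    (hcoloopless : ∀ i : Fin n, M✶.Indep {i})
    (f g : Fin n → MvPolynomial (Fin n) k)
    (hf1 : ∀ i, (f i).IsHomogeneous 1) (hg1 : ∀ i, (g i).IsHomogeneous 1)
    -- `f` realizes `M` and `g` realizes the dual matroid `M✶`:
    (hM : ∀ I : Set (Fin n), M.Indep I ↔ LinearIndependent k (fun i : I => f i))
    (hMd : ∀ I : Set (Fin n), M✶.Indep I ↔ LinearIndependent k (fun i : I => g i))
    -- the `f i` and `g i` together span the space of linear forms, i.e. `S = k[W ⊕ W^⊥]`:
    (hspan : ∀ j : Fin n, (X j : MvPolynomial (Fin n) k)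
      ∈ Submodule.span k (Set.range f ∪ Set.range g))
    -- the ideal of pairs:
    (𝔞 : Ideal (MvPolynomial (Fin n) k))
    (h𝔞 : 𝔞 = Ideal.span (Set.range fun i => f i * g i)) :
    Ideal.span (Set.range f) ∈ 𝔞.minimalPrimes ∧
    Ideal.span (Set.range g) ∈ 𝔞.minimalPrimes := by
  subst h𝔞
  have hf0 : ∀ i, f i ≠ 0 := fun i => ((hM {i}).1 (hloopless i)).ne_zero ⟨i, rfl⟩
  have hg0 : ∀ i, g i ≠ 0 := fun i => ((hMd {i}).1 (hcoloopless i)).ne_zero ⟨i, rfl⟩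
  have hdisj : Disjoint (Submodule.span k (range f)) (Submodule.span k (range g)) := by
    have := FiniteDimensional.span_of_finite k (finite_range f)
    have := FiniteDimensional.span_of_finite k (finite_range g)
    refine Submodule.disjoint_of_finrank_add_finrank_le ?_
    rw [Matroid.finrank_span_range_add_finrank_span_range_dual hE hM hMd, Nat.card_eq_fintype_card]
    refine card_le_finrank_of_forall_X_mem fun j => ?_
    simpa [Submodule.span_union] using hspan j
  refine ⟨Ideal.span_range_mem_minimalPrimes_span_range_mul (isPrime_span_of_isHomogeneous_one hf1)
    (notMem_ideal_span_of_disjoint hf1 hg1 hg0 hdisj), ?_⟩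
  simp_rw [mul_comm (f _)]
  exact Ideal.span_range_mem_minimalPrimes_span_range_mul (isPrime_span_of_isHomogeneous_one hg1)
    (notMem_ideal_span_of_disjoint hg1 hf1 hf0 hdisj.symm)

/-- Let `M` be a loopless and coloopless matroid realized by `W`, with
ideal of pairs `𝔞 ⊆ S`.  Then `𝔭_{[n],∅} = (f 1, …, f n)` and `𝔭_{∅,[n]} = (g 1, …, g n)`
are minimal primes of `S/𝔞`. -/
theorem span_f_and_span_g_minimalPrimes
    (k : Type) [Field k] (n r : ℕ)
    (M : Matroid (Fin n)) (hE : M.E = Set.univ)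
    (hloopless : ∀ i : Fin n, M.Indep {i})
    (hcoloopless : ∀ i : Fin n, M✶.Indep {i})
    (f g : Fin n → MvPolynomial (Fin n) k)
    (hf1 : ∀ i, (f i).IsHomogeneous 1) (hg1 : ∀ i, (g i).IsHomogeneous 1)
    -- `f` realizes `M` and `g` realizes the dual matroid `M✶`:
    (hM : ∀ I : Set (Fin n), M.Indep I ↔ LinearIndependent k (fun i : I => f i))
    (hMd : ∀ I : Set (Fin n), M✶.Indep I ↔ LinearIndependent k (fun i : I => g i))
    -- the `f i` and `g i` together span the space of linear forms, i.e. `S = k[W ⊕ W^⊥]`: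
    (hspan : ∀ j : Fin n, (X j : MvPolynomial (Fin n) k)
      ∈ Submodule.span k (Set.range f ∪ Set.range g))
    -- the ideal of pairs:
    (𝔞 : Ideal (MvPolynomial (Fin n) k))
    (h𝔞 : 𝔞 = Ideal.span (Set.range fun i => f i * g i)) :
    Ideal.span (Set.range f) ∈ 𝔞.minimalPrimes ∧
    Ideal.span (Set.range g) ∈ 𝔞.minimalPrimes :=
  span_f_and_span_g_minimalPrimes_general k n M hE hloopless hcoloopless f g hf1 hg1 hM hMd hspan 𝔞
    h𝔞
end
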